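/- In the sequent calculus G3cp for classical propositional logic, if Γ, φ∧ψ ⇒ Δ has a derivation of depth at most n, then Γ, φ, ψ ⇒ Δ has a derivation of depth at most n (inversion for left conjunction). -/
import Mathlib


set_option autoImplicit true

inductive PropForm : Type
  | var : ℕ → PropForm
  | fls : PropForm
  | tru : PropForm
  | conj : PropForm → PropForm → PropForm
  | disj : PropForm → PropForm → PropForm
  | arr : PropForm → PropForm → PropForm
deriving DecidableEq

open PropForm

/-- The set of propositional atoms occurring in a formula. -/
def atoms : PropForm → Finset ℕ
  | var p => {p}
  | fls => ∅
  | tru => ∅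
  | conj φ ψ => atoms φ ∪ atoms ψ
  | disj φ ψ => atoms φ ∪ atoms ψ
  | arr φ ψ => atoms φ ∪ atoms ψ

/-- `G3cpN n Γ Δ` : the multi-conclusion sequent `Γ ⇒ Δ` has a G3cp-derivation of depth at most `n`. -/
inductive G3cpN : ℕ → Multiset PropForm → Multiset PropForm → Prop
  | ax (n : ℕ) (Γ Δ : Multiset PropForm) (p : ℕ) : G3cpN n (var p ::ₘ Γ) (var p ::ₘ Δ)
  | flsL (n : ℕ) (Γ Δ : Multiset PropForm) : G3cpN n (fls ::ₘ Γ) Δ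
  | truR (n : ℕ) (Γ Δ : Multiset PropForm) : G3cpN n Γ (tru ::ₘ Δ)
  | conjL : G3cpN n (φ ::ₘ ψ ::ₘ Γ) Δ → G3cpN (n+1) (conj φ ψ ::ₘ Γ) Δ
  | conjR : G3cpN n Γ (φ ::ₘ Δ) → G3cpN n Γ (ψ ::ₘ Δ) → G3cpN (n+1) Γ (conj φ ψ ::ₘ Δ)
  | disjL : G3cpN n (φ ::ₘ Γ) Δ → G3cpN n (ψ ::ₘ Γ) Δ → G3cpN (n+1) (disj φ ψ ::ₘ Γ) Δ
  | disjR : G3cpN n Γ (φ ::ₘ ψ ::ₘ Δ) → G3cpN (n+1) Γ (disj φ ψ ::ₘ Δ)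
  | arrL : G3cpN n Γ (φ ::ₘ Δ) → G3cpN n (ψ ::ₘ Γ) Δ → G3cpN (n+1) (arr φ ψ ::ₘ Γ) Δ
  | arrR : G3cpN n (φ ::ₘ Γ) (ψ ::ₘ Δ) → G3cpN (n+1) Γ (arr φ ψ ::ₘ Δ)

lemma perm3 {α : Type*} (a b c : α) (s : Multiset α) :
    a ::ₘ b ::ₘ c ::ₘ s = c ::ₘ a ::ₘ b ::ₘ s := by
  rw [Multiset.cons_swap b c, Multiset.cons_swap a c]

lemma perm4 {α : Type*} (a b c d : α) (s : Multiset α) :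
    a ::ₘ b ::ₘ c ::ₘ d ::ₘ s = c ::ₘ d ::ₘ a ::ₘ b ::ₘ s := by
  rw [Multiset.cons_swap b c, Multiset.cons_swap a c, Multiset.cons_swap b d,
    Multiset.cons_swap a d]

lemma G3cpN_mono {n : ℕ} {Γ Δ : Multiset PropForm} (h : G3cpN n Γ Δ) :
    G3cpN (n + 1) Γ Δ := by
  induction h with
  | ax n Γ Δ p => exact .ax _ _ _ _
  | flsL => exact .flsL _ _ _
  | truR => exact .truR _ _ _
  | conjL _ ih => exact .conjL ih
  | conjR _ _ ih1 ih2 => exact .conjR ih1 ih2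
  | disjL _ _ ih1 ih2 => exact .disjL ih1 ih2
  | disjR _ ih => exact .disjR ih
  | arrL _ _ ih1 ih2 => exact .arrL ih1 ih2
  | arrR _ ih => exact .arrR ih

lemma G3cp_conjL_inv_aux (φ ψ : PropForm) :
    ∀ {n : ℕ} {Γ' Δ : Multiset PropForm}, G3cpN n Γ' Δ →
      ∀ Γ, Γ' = conj φ ψ ::ₘ Γ → G3cpN n (φ ::ₘ ψ ::ₘ Γ) Δ := by
  intro n Γ' Δ h
  induction h with
  | ax n Γ₀ Δ p =>
    intro Γ e
    rcases Multiset.cons_eq_cons.mp e with ⟨h1, _⟩ | ⟨_, u, _, hΓ⟩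
    · simp at h1
    · rw [hΓ, perm3]
      exact .ax _ _ _ _
  | flsL n Γ₀ Δ =>
    intro Γ e
    rcases Multiset.cons_eq_cons.mp e with ⟨h1, _⟩ | ⟨_, u, _, hΓ⟩
    · simp at h1
    · rw [hΓ, perm3]
      exact .flsL _ _ _
  | truR n Γ₀ Δ =>
    intro Γ e
    exact .truR _ _ _
  | @conjL n φ' ψ' Γ₀ Δ d ih =>
    intro Γ e
    rcases Multiset.cons_eq_cons.mp e with ⟨h1, h2⟩ | ⟨_, u, hΓ₀, hΓ⟩
    · obtain ⟨rfl, rfl⟩ : φ' = φ ∧ ψ' = ψ := by simpa using h1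
      rw [← h2]
      exact G3cpN_mono d
    · have h' := ih (φ' ::ₘ ψ' ::ₘ u) (by rw [hΓ₀, perm3])
      rw [hΓ, perm3 φ ψ (conj φ' ψ')]
      exact .conjL (perm4 φ ψ φ' ψ' u ▸ h')
  | @conjR n Γ₀ φ' Δ ψ' d1 d2 ih1 ih2 =>
    intro Γ e
    exact .conjR (ih1 Γ e) (ih2 Γ e)
  | @disjL n φ' Γ₀ Δ ψ' d1 d2 ih1 ih2 =>
    intro Γ e
    rcases Multiset.cons_eq_cons.mp e with ⟨h1, _⟩ | ⟨_, u, hΓ₀, hΓ⟩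
    · simp at h1
    · have h1' := ih1 (φ' ::ₘ u) (by rw [hΓ₀, Multiset.cons_swap])
      have h2' := ih2 (ψ' ::ₘ u) (by rw [hΓ₀, Multiset.cons_swap])
      rw [hΓ, perm3 φ ψ (disj φ' ψ')]
      exact .disjL (perm3 φ ψ φ' u ▸ h1') (perm3 φ ψ ψ' u ▸ h2')
  | disjR d ih =>
    intro Γ e
    exact .disjR (ih Γ e)
  | @arrL n Γ₀ φ' Δ ψ' d1 d2 ih1 ih2 =>
    intro Γ e
    rcases Multiset.cons_eq_cons.mp e with ⟨h1, _⟩ | ⟨_, u, hΓ₀, hΓ⟩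
    · simp at h1
    · have h1' := ih1 u hΓ₀
      have h2' := ih2 (ψ' ::ₘ u) (by rw [hΓ₀, Multiset.cons_swap])
      rw [hΓ, perm3 φ ψ (arr φ' ψ')]
      exact .arrL h1' (perm3 φ ψ ψ' u ▸ h2')
  | @arrR n φ' Γ₀ ψ' Δ d ih =>
    intro Γ e
    exact .arrR (perm3 φ ψ φ' Γ ▸ ih (φ' ::ₘ Γ) (by rw [e, Multiset.cons_swap]))

/-- Inversion for left conjunction in G3cp, depth-preserving: if `Γ, φ ∧ ψ ⇒ Δ` has a
derivation of depth at most `n`, then so does `Γ, φ, ψ ⇒ Δ`. -/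
theorem G3cp_conjL_inversion
    (n : ℕ) (Γ Δ : Multiset PropForm) (φ ψ : PropForm)
    (h : G3cpN n (conj φ ψ ::ₘ Γ) Δ) : G3cpN n (φ ::ₘ ψ ::ₘ Γ) Δ := by
  exact G3cp_conjL_inv_aux φ ψ h Γ rfl
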